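/- Let f, d, c_in, c_out be positive integers with f + 1 ≤ d, let w = (w_1,…,w_{c_out}) with w_i = (w_{i,1},…,w_{i,c_in}) and w_{i,j} = (w_{i,j,i',j'})_{i',j'=1}^{2f+1} ∈ ℝ^{(2f+1)×(2f+1)} be filter masks for multi-channel two-dimensional convolution with zero padding, and let W = T(w) ∈ ℝ^{d²c_out × d²c_in} be the associated block convolution matrix. Then for every p ∈ [1, +∞], ‖W‖_p ≤ (max_{1≤j≤c_in} ∑_{i=1}^{c_out} ∑_{i'=1}^{2f+1} ∑_{j'=1}^{2f+1} |w_{i,j,i',j'}|)^{1/p} · (max_{1≤i≤c_out} ∑_{j=1}^{c_in} ∑_{i'=1}^{2f+1} ∑_{j'=1}^{2f+1} |w_{i,j,i',j'}|)^{1−1/p}. -/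

import Mathlib

open Filter Matrix Topology
open scoped ENNReal

noncomputable section

/-- The ReLU activation applied componentwise. -/
def relu {d : ℕ} (x : Fin d → ℝ) : Fin d → ℝ := fun i => max (x i) 0

/-- Cast a vector along an equality of dimensions. -/
def castVec {a b : ℕ} (h : a = b) (v : Fin a → ℝ) : Fin b → ℝ := fun i => v (Fin.cast h.symm i)

/-- Cast a matrix along equalities of its dimensions. -/
def mcast {a a' b b' : ℕ} (ha : a = a') (hb : b = b') (M : Matrix (Fin a) (Fin b) ℝ) :
    Matrix (Fin a') (Fin b') ℝ :=
  M.submatrix (Fin.cast ha.symm) (Fin.cast hb.symm)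

/-- Outputs of consecutive fully connected ReLU layers:
`hiddenSeq c W b m x = (σ(W m ⬝ · + b m) ∘ ⋯ ∘ σ(W 1 ⬝ · + b 1)) x` (0-based weight indices). -/
def hiddenSeq (c : ℕ → ℕ) (W : ∀ m, Matrix (Fin (c (m+1))) (Fin (c m)) ℝ)
    (b : ∀ m, Fin (c (m+1)) → ℝ) : (m : ℕ) → (Fin (c 0) → ℝ) → Fin (c m) → ℝ
  | 0 => fun x => x
  | m+1 => fun x => relu ((W m).mulVec (hiddenSeq c W b m x) + b m)

/-- A residual block with `q` layers (`q ≥ 1`), shortcut connection added before the last ReLU. -/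
def resBlock (d q : ℕ) (hq : 0 < q) (c : ℕ → ℕ) (hc0 : c 0 = d) (hcq : c q = d)
    (W : ∀ m, Matrix (Fin (c (m+1))) (Fin (c m)) ℝ)
    (b : ∀ m, Fin (c (m+1)) → ℝ) (x : Fin d → ℝ) : Fin d → ℝ :=
  castVec (show c (q-1+1) = d from (congrArg c (Nat.succ_pred_eq_of_pos hq)).trans hcq)
    (relu ((W (q-1)).mulVec (hiddenSeq c W b (q-1) (castVec hc0.symm x))
      + castVec (show c (q-1+1) = d from
          (congrArg c (Nat.succ_pred_eq_of_pos hq)).trans hcq).symm x + b (q-1)))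

/-- The deep network with shortcut connections: composition of residual blocks `0,…,n`. -/
def resNet (d : ℕ) (q : ℕ → ℕ) (hq : ∀ n, 0 < q n) (c : ℕ → ℕ → ℕ)
    (hc0 : ∀ n, c n 0 = d) (hcq : ∀ n, c n (q n) = d)
    (W : ∀ n m, Matrix (Fin (c n (m+1))) (Fin (c n m)) ℝ)
    (b : ∀ n m, Fin (c n (m+1)) → ℝ) :
    ℕ → (Fin d → ℝ) → Fin d → ℝ
  | 0 => resBlock d (q 0) (hq 0) (c 0) (hc0 0) (hcq 0) (W 0) (b 0)
  | n+1 => fun x => resBlock d (q (n+1)) (hq (n+1)) (c (n+1)) (hc0 (n+1)) (hcq (n+1))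
      (W (n+1)) (b (n+1)) (resNet d q hq c hc0 hcq W b n x)

/-- `J` is a 0/1 diagonal (activation) matrix. -/
def IsActivation {a : ℕ} (J : Matrix (Fin a) (Fin a) ℝ) : Prop :=
  (∀ i, J i i = 0 ∨ J i i = 1) ∧ ∀ i j, i ≠ j → J i j = 0

/-- The pre-activation vector `z` has exactly the sign pattern prescribed by the
activation matrix `J`: positive on the support of `J` and `≤ 0` off it. -/
def inPattern {a : ℕ} (J : Matrix (Fin a) (Fin a) ℝ) (z : Fin a → ℝ) : Prop :=
  ∀ i, J i i = 1 ↔ 0 < z i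

/-- `x` lies in the activation domain of a single residual block w.r.t. `J`. -/
def blockDomain (d q : ℕ) (hq : 0 < q) (c : ℕ → ℕ) (hc0 : c 0 = d) (hcq : c q = d)
    (W : ∀ m, Matrix (Fin (c (m+1))) (Fin (c m)) ℝ)
    (b : ∀ m, Fin (c (m+1)) → ℝ)
    (J : ∀ m, Matrix (Fin (c (m+1))) (Fin (c (m+1))) ℝ) (x : Fin d → ℝ) : Prop :=
  (∀ m, m + 1 < q →
    inPattern (J m) ((W m).mulVec (hiddenSeq c W b m (castVec hc0.symm x)) + b m)) ∧
  inPattern (J (q-1)) ((W (q-1)).mulVec (hiddenSeq c W b (q-1) (castVec hc0.symm x))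
    + castVec (show c (q-1+1) = d from
        (congrArg c (Nat.succ_pred_eq_of_pos hq)).trans hcq).symm x + b (q-1))

/-- The input fed to block `k` (output of the previous blocks; the input itself when `k = 0`). -/
def netInput (d : ℕ) (q : ℕ → ℕ) (hq : ∀ n, 0 < q n) (c : ℕ → ℕ → ℕ)
    (hc0 : ∀ n, c n 0 = d) (hcq : ∀ n, c n (q n) = d)
    (W : ∀ n m, Matrix (Fin (c n (m+1))) (Fin (c n m)) ℝ)
    (b : ∀ n m, Fin (c n (m+1)) → ℝ) :
    ℕ → (Fin d → ℝ) → Fin d → ℝ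
  | 0 => fun x => x
  | k+1 => resNet d q hq c hc0 hcq W b k

/-- Activation domain of the multi-residual-block network `𝒩_{c,q,n}` w.r.t. `J`:
`x ∈ [0,1]^d` and at each layer of each block the pre-activation has the pattern of `J`. -/
def InActDomain (d : ℕ) (q : ℕ → ℕ) (hq : ∀ n, 0 < q n) (c : ℕ → ℕ → ℕ)
    (hc0 : ∀ n, c n 0 = d) (hcq : ∀ n, c n (q n) = d)
    (W : ∀ n m, Matrix (Fin (c n (m+1))) (Fin (c n m)) ℝ)
    (b : ∀ n m, Fin (c n (m+1)) → ℝ)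
    (J : ∀ n m, Matrix (Fin (c n (m+1))) (Fin (c n (m+1))) ℝ)
    (n : ℕ) (x : Fin d → ℝ) : Prop :=
  (∀ i, x i ∈ Set.Icc (0:ℝ) 1) ∧
  ∀ k ≤ n, blockDomain d (q k) (hq k) (c k) (hc0 k) (hcq k) (W k) (b k) (J k)
    (netInput d q hq c hc0 hcq W b k x)

/-- `prodSeg f a n = f n * f (n-1) * ⋯ * f a` (the identity when `n < a`). -/
def prodSeg {α : Type*} [Monoid α] (f : ℕ → α) (a n : ℕ) : α :=
  ((List.range' a (n + 1 - a)).reverse.map f).prod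

/-- `innerProdFrom c W J a m = (J (a+m) W (a+m)) ⋯ (J (a+1) W (a+1)) (J a W a)`,
i.e. the product `∏_{m'=a+1}^{a+m} J_{m'} W_{m'}` in the 1-based indexing of the paper. -/
def innerProdFrom (c : ℕ → ℕ) (W : ∀ m, Matrix (Fin (c (m+1))) (Fin (c m)) ℝ)
    (J : ∀ m, Matrix (Fin (c (m+1))) (Fin (c (m+1))) ℝ) (a : ℕ) :
    (m : ℕ) → Matrix (Fin (c (a + m))) (Fin (c a)) ℝ
  | 0 => (1 : Matrix (Fin (c a)) (Fin (c a)) ℝ)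
  | m+1 => (J (a + m) * W (a + m)) * innerProdFrom c W J a m

/-- The matrix `∏_{m=1}^{q} J_m W_m + J_q` of a residual block. -/
def blockMat (d q : ℕ) (hq : 0 < q) (c : ℕ → ℕ) (hc0 : c 0 = d) (hcq : c q = d)
    (W : ∀ m, Matrix (Fin (c (m+1))) (Fin (c m)) ℝ)
    (J : ∀ m, Matrix (Fin (c (m+1))) (Fin (c (m+1))) ℝ) :
    Matrix (Fin d) (Fin d) ℝ :=
  mcast ((congrArg c (Nat.zero_add q)).trans hcq) hc0 (innerProdFrom c W J 0 q)
    + mcast (show c (q-1+1) = d from (congrArg c (Nat.succ_pred_eq_of_pos hq)).trans hcq)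
        (show c (q-1+1) = d from (congrArg c (Nat.succ_pred_eq_of_pos hq)).trans hcq) (J (q-1))

/-- `Aseq n = ∏_{k=0}^{n} (∏_{m=1}^{q_k} J^{(k)}_m W^{(k)}_m + J^{(k)}_{q_k})`. -/
def Aseq (d : ℕ) (q : ℕ → ℕ) (hq : ∀ n, 0 < q n) (c : ℕ → ℕ → ℕ)
    (hc0 : ∀ n, c n 0 = d) (hcq : ∀ n, c n (q n) = d)
    (W : ∀ n m, Matrix (Fin (c n (m+1))) (Fin (c n m)) ℝ)
    (J : ∀ n m, Matrix (Fin (c n (m+1))) (Fin (c n (m+1))) ℝ) (n : ℕ) :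
    Matrix (Fin d) (Fin d) ℝ :=
  prodSeg (fun k => blockMat d (q k) (hq k) (c k) (hc0 k) (hcq k) (W k) (J k)) 0 n

/-- `∑_{m=1}^{q} (∏_{m'=m+1}^{q} J_{m'} W_{m'}) J_m b_m` for one residual block. -/
def blockBias (d q : ℕ) (c : ℕ → ℕ) (hcq : c q = d)
    (W : ∀ m, Matrix (Fin (c (m+1))) (Fin (c m)) ℝ)
    (b : ∀ m, Fin (c (m+1)) → ℝ)
    (J : ∀ m, Matrix (Fin (c (m+1))) (Fin (c (m+1))) ℝ) : Fin d → ℝ :=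
  ∑ m ∈ (Finset.range q).attach,
    (mcast ((congrArg c (Nat.add_sub_cancel' (Finset.mem_range.mp m.2))).trans hcq) rfl
        (innerProdFrom c W J (m.1+1) (q - (m.1+1)))).mulVec ((J m.1).mulVec (b m.1))

/-- `Bseq n = ∑_{k=0}^{n} ∑_{m=1}^{q_k} [∏_{k'=k+1}^{n} (∏_{m'} J W + J)] (∏_{m'>m} J W) J_m b_m`. -/
def Bseq (d : ℕ) (q : ℕ → ℕ) (hq : ∀ n, 0 < q n) (c : ℕ → ℕ → ℕ)
    (hc0 : ∀ n, c n 0 = d) (hcq : ∀ n, c n (q n) = d)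
    (W : ∀ n m, Matrix (Fin (c n (m+1))) (Fin (c n m)) ℝ)
    (b : ∀ n m, Fin (c n (m+1)) → ℝ)
    (J : ∀ n m, Matrix (Fin (c n (m+1))) (Fin (c n (m+1))) ℝ) (n : ℕ) : Fin d → ℝ :=
  ∑ k ∈ Finset.range (n+1),
    (prodSeg (fun k' => blockMat d (q k') (hq k') (c k') (hc0 k') (hcq k') (W k') (J k'))
        (k+1) n).mulVec
      (blockBias d (q k) (c k) (hcq k) (W k) (b k) (J k))

/-- A family of norms on the spaces `ℝ^m` which is monotone in the sense of the paper. -/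
structure NormFamily where
  N : ∀ m : ℕ, (Fin m → ℝ) → ℝ
  eq_zero_iff : ∀ (m : ℕ) (x : Fin m → ℝ), N m x = 0 ↔ x = 0
  add_le : ∀ (m : ℕ) (x y : Fin m → ℝ), N m (x + y) ≤ N m x + N m y
  smul_eq : ∀ (m : ℕ) (r : ℝ) (x : Fin m → ℝ), N m (r • x) = |r| * N m x
  mono : ∀ (m : ℕ) (x y : Fin m → ℝ), (∀ i, |x i| ≤ |y i|) → N m x ≤ N m y

/-- The operator (matrix) norm induced by a family of vector norms. -/
def NormFamily.op (F : NormFamily) {a b : ℕ} (M : Matrix (Fin a) (Fin b) ℝ) : ℝ :=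
  sSup ((fun x => F.N a (M.mulVec x) / F.N b x) '' {x : Fin b → ℝ | x ≠ 0})

/-- 1-D Toeplitz convolution-with-zero-padding matrix of a filter mask `u ∈ ℝ^{2f+1}`:
`(T1 f d u) a b = u (f - b + a)` when `-f ≤ b - a ≤ f` and `0` otherwise. -/
def T1 (f d : ℕ) (u : Fin (2*f+1) → ℝ) : Matrix (Fin d) (Fin d) ℝ :=
  fun a b =>
    if h : -(f:ℤ) ≤ ((b:ℕ):ℤ) - ((a:ℕ):ℤ) ∧ ((b:ℕ):ℤ) - ((a:ℕ):ℤ) ≤ (f:ℤ) then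
      u ⟨((f:ℤ) - ((b:ℕ):ℤ) + ((a:ℕ):ℤ)).toNat, by omega⟩
    else 0

/-- 2-D block Toeplitz convolution matrix of a mask `v ∈ ℝ^{(2f+1)×(2f+1)}`:
the `(a,b)` block is `T1 f d (v (f - b + a))` when `-f ≤ b - a ≤ f` and `0` otherwise. -/
def T2 (f d : ℕ) (v : Fin (2*f+1) → Fin (2*f+1) → ℝ) :
    Matrix (Fin d × Fin d) (Fin d × Fin d) ℝ :=
  fun P Q =>
    if h : -(f:ℤ) ≤ ((Q.1:ℕ):ℤ) - ((P.1:ℕ):ℤ) ∧ ((Q.1:ℕ):ℤ) - ((P.1:ℕ):ℤ) ≤ (f:ℤ) then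
      T1 f d (v ⟨((f:ℤ) - ((Q.1:ℕ):ℤ) + ((P.1:ℕ):ℤ)).toNat, by omega⟩) P.2 Q.2
    else 0

/-- The block matrix `T(w)` of a multi-channel convolution
with `cin` input channels and `cout` output channels: the `(i,j)` block is `T2 f d (w i j)`. -/
def Tmulti (f d cin cout : ℕ)
    (w : Fin cout → Fin cin → Fin (2*f+1) → Fin (2*f+1) → ℝ) :
    Matrix (Fin cout × Fin d × Fin d) (Fin cin × Fin d × Fin d) ℝ :=
  fun P Q => T2 f d (w P.1 Q.1) P.2 Q.2

/-- Multi-channel 2-D convolution with zero padding, as matrix-vector multiplication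
by the Toeplitz-type matrices `T2`. -/
def convLayer (f d cin cout : ℕ)
    (w : Fin cout → Fin cin → Fin (2*f+1) → Fin (2*f+1) → ℝ)
    (x : Fin cin → Fin d → Fin d → ℝ) : Fin cout → Fin d → Fin d → ℝ :=
  fun i a b => ∑ j, ∑ s, ∑ t, T2 f d (w i j) (a, b) (s, t) * x j s t

/-- Cast the channel index of a tensor along an equality of channel numbers. -/
def castChan {d a b : ℕ} (h : a = b) (x : Fin a → Fin d → Fin d → ℝ) :
    Fin b → Fin d → Fin d → ℝ :=
  fun i => x (Fin.cast h.symm i)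

/-- Hidden layers of a convolutional residual block (with constant-per-channel biases `β`). -/
def convHidden (d : ℕ) (c : ℕ → ℕ) (f : ℕ → ℕ)
    (w : ∀ m, Fin (c (m+1)) → Fin (c m) → Fin (2 * f m + 1) → Fin (2 * f m + 1) → ℝ)
    (β : ∀ m, Fin (c (m+1)) → ℝ) :
    (m : ℕ) → (Fin (c 0) → Fin d → Fin d → ℝ) → Fin (c m) → Fin d → Fin d → ℝ
  | 0 => fun x => x
  | m+1 => fun x i a b =>
      max (convLayer (f m) d (c m) (c (m+1)) (w m) (convHidden d c f w β m x) i a b + β m i) 0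

/-- A convolutional residual block with `Q ≥ 1` convolutional layers and a shortcut connection. -/
def convBlock (d Q : ℕ) (hQ : 0 < Q) (cres : ℕ) (c : ℕ → ℕ)
    (hc0 : c 0 = cres) (hcq : c Q = cres) (f : ℕ → ℕ)
    (w : ∀ m, Fin (c (m+1)) → Fin (c m) → Fin (2 * f m + 1) → Fin (2 * f m + 1) → ℝ)
    (β : ∀ m, Fin (c (m+1)) → ℝ)
    (x : Fin cres → Fin d → Fin d → ℝ) : Fin cres → Fin d → Fin d → ℝ :=
  castChan (show c (Q-1+1) = cres from (congrArg c (Nat.succ_pred_eq_of_pos hQ)).trans hcq)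
    (fun i a b =>
      max (convLayer (f (Q-1)) d (c (Q-1)) (c (Q-1+1)) (w (Q-1))
            (convHidden d c f w β (Q-1) (castChan hc0.symm x)) i a b
          + x (Fin.cast (show c (Q-1+1) = cres from
              (congrArg c (Nat.succ_pred_eq_of_pos hQ)).trans hcq) i) a b
          + β (Q-1) i) 0)

/-- The deep convolutional ResNet without the output layer: sampling layer
`σ(x ∗ w_s + b_s)` (block `0`) followed by the convolutional residual blocks `1,…,n`. -/
def convNet (d cin cres : ℕ) (q : ℕ → ℕ) (hq : ∀ n, 0 < q n)
    (c : ℕ → ℕ → ℕ) (hc00 : c 0 0 = cin) (h01 : c 0 1 = cres)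
    (hc0 : ∀ n, 0 < n → c n 0 = cres) (hcq : ∀ n, 0 < n → c n (q n) = cres)
    (f : ℕ → ℕ → ℕ)
    (w : ∀ n m, Fin (c n (m+1)) → Fin (c n m) → Fin (2 * f n m + 1) → Fin (2 * f n m + 1) → ℝ)
    (β : ∀ n m, Fin (c n (m+1)) → ℝ) :
    ℕ → (Fin cin → Fin d → Fin d → ℝ) → Fin cres → Fin d → Fin d → ℝ
  | 0 => fun x => castChan h01 (fun i a b =>
      max (convLayer (f 0 0) d (c 0 0) (c 0 1) (w 0 0) (castChan hc00.symm x) i a b + β 0 0 i) 0)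
  | n+1 => fun x =>
      convBlock d (q (n+1)) (hq (n+1)) cres (c (n+1)) (hc0 (n+1) (Nat.succ_pos n))
        (hcq (n+1) (Nat.succ_pos n)) (f (n+1)) (w (n+1)) (β (n+1))
        (convNet d cin cres q hq c hc00 h01 hc0 hcq f w β n x)

/-- The ℓ_p norm of a vector, `p ∈ [1,∞]`. -/
def lpNorm (p : ℝ≥0∞) {ι : Type*} [Fintype ι] (x : ι → ℝ) : ℝ :=
  if p = ∞ then ⨆ i, |x i| else (∑ i, |x i| ^ p.toReal) ^ (1 / p.toReal)

/-- The matrix (operator) norm induced by the ℓ_p vector norms. -/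
def opNormP (p : ℝ≥0∞) {α β : Type*} [Fintype α] [Fintype β] (M : Matrix α β ℝ) : ℝ :=
  sSup ((fun x => lpNorm p (M.mulVec x) / lpNorm p x) '' {x : β → ℝ | x ≠ 0})

/-- Maximum absolute column sum of a matrix (the operator norm induced by ℓ₁). -/
def maxColSum {α β : Type*} [Fintype α] [Fintype β] (M : Matrix α β ℝ) : ℝ :=
  ⨆ j, ∑ i, |M i j|

/-- Maximum absolute row sum of a matrix (the operator norm induced by ℓ_∞). -/
def maxRowSum {α β : Type*} [Fintype α] [Fintype β] (M : Matrix α β ℝ) : ℝ :=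
  ⨆ i, ∑ j, |M i j|

/-- The block matrix with blocks `A i j ∈ ℝ^{r×c}`, `i < N`, `j < M`. -/
def blockMatrixOf {N M r c : ℕ} (A : Fin N → Fin M → Matrix (Fin r) (Fin c) ℝ) :
    Matrix (Fin N × Fin r) (Fin M × Fin c) ℝ :=
  fun p q => A p.1 q.1 p.2 q.2

/-- The factor `N^{(n)}_m` of Theorem 5.2: the bound of Lemma 5.1 on `‖T(w)‖_p`. -/
def Nfactor (p : ℝ≥0∞) {f cin cout : ℕ}
    (w : Fin cout → Fin cin → Fin (2*f+1) → Fin (2*f+1) → ℝ) : ℝ :=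
  (⨆ j : Fin cin, ∑ i, ∑ i', ∑ j', |w i j i' j'|) ^ ((1/p).toReal)
    * (⨆ i : Fin cout, ∑ j, ∑ i', ∑ j', |w i j i' j'|) ^ (1 - (1/p).toReal)

/-- Zero padding of a vector `x ∈ ℝ^{din}` to a vector `(x, 0) ∈ ℝ^{d}`. -/
def padVec (din d : ℕ) (x : Fin din → ℝ) : Fin d → ℝ :=
  fun i => if h : (i : ℕ) < din then x ⟨i, h⟩ else 0

/-- The matrix `[Ws  0] ∈ ℝ^{d × d}` obtained by padding `Ws ∈ ℝ^{d × din}` with zero columns. -/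
def padMat (din d : ℕ) (Ws : Matrix (Fin d) (Fin din) ℝ) : Matrix (Fin d) (Fin d) ℝ :=
  fun i j => if h : (j : ℕ) < din then Ws i ⟨j, h⟩ else 0

/-! On the band `-f ≤ b - a ≤ f` the mask index `f - b + a` is injective in `b` (and in `a`),
so a row of `T(w)` lists distinct mask entries: its absolute sum is at most the `ℓ¹` mass of
the masks of its output channel, and likewise for columns and input channels. The `ℓ^p` bound is
then the Schur test: weighted Hölder gives `|(Mx)_i|^p ≤ R^{p-1} ∑_j |M_ij| |x_j|^p` for row sums
`≤ R`, and summing over `i` with column sums `≤ C` gives `‖Mx‖_p^p ≤ R^{p-1} C ‖x‖_p^p`. -/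

open Finset

lemma lpNorm_pos {β : Type*} [Fintype β] (p : ℝ≥0∞) {x : β → ℝ} (hx : x ≠ 0) :
    0 < lpNorm p x := by
  obtain ⟨j, hj⟩ := Function.ne_iff.mp hx
  have hxj : 0 < |x j| := abs_pos.mpr hj
  unfold lpNorm
  split_ifs
  · exact hxj.trans_le (le_ciSup (f := fun k => |x k|) (Finite.bddAbove_range _) j)
  · refine Real.rpow_pos_of_pos ?_ _
    exact (Real.rpow_pos_of_pos hxj _).trans_le
      (single_le_sum (fun k _ => Real.rpow_nonneg (abs_nonneg _) _) (mem_univ j))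

lemma rpow_sum_mul_le {β : Type*} [Fintype β] {t : ℝ} (ht : 1 ≤ t) (w g : β → ℝ)
    (hw : ∀ j, 0 ≤ w j) (hg : ∀ j, 0 ≤ g j) :
    (∑ j, w j * g j) ^ t ≤ (∑ j, w j) ^ (t - 1) * ∑ j, w j * g j ^ t := by
  have ht0 : 0 < t := one_pos.trans_le ht
  have hW : 0 ≤ ∑ j, w j := sum_nonneg fun j _ => hw j
  have hWg : 0 ≤ ∑ j, w j * g j ^ t :=
    sum_nonneg fun j _ => mul_nonneg (hw j) (Real.rpow_nonneg (hg j) _)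
  calc (∑ j, w j * g j) ^ t
      ≤ ((∑ j, w j) ^ (1 - t⁻¹) * (∑ j, w j * g j ^ t) ^ t⁻¹) ^ t :=
        Real.rpow_le_rpow (sum_nonneg fun j _ => mul_nonneg (hw j) (hg j))
          (Real.inner_le_weight_mul_Lp_of_nonneg univ ht w g hw hg) ht0.le
    _ = (∑ j, w j) ^ (t - 1) * ∑ j, w j * g j ^ t := by
        rw [Real.mul_rpow (Real.rpow_nonneg hW _) (Real.rpow_nonneg hWg _),
          ← Real.rpow_mul hW, ← Real.rpow_mul hWg, inv_mul_cancel₀ ht0.ne', Real.rpow_one,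
          sub_mul, one_mul, inv_mul_cancel₀ ht0.ne']

lemma abs_mulVec_le {α β : Type*} [Fintype β] (M : Matrix α β ℝ) (x : β → ℝ) (i : α) :
    |(M *ᵥ x) i| ≤ ∑ j, |M i j| * |x j| := by
  simpa only [Matrix.mulVec, dotProduct, abs_mul] using
    abs_sum_le_sum_abs (fun j => M i j * x j) univ

section SchurTest

variable {α β : Type*} [Fintype α] [Fintype β]

lemma lpNorm_top_mulVec_le (M : Matrix α β ℝ) {R : ℝ} (hR : 0 ≤ R)
    (hrow : ∀ i, ∑ j, |M i j| ≤ R) (x : β → ℝ) :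
    lpNorm ∞ (M *ᵥ x) ≤ R * lpNorm ∞ x := by
  simp only [lpNorm, if_true]
  have hx : ∀ j, |x j| ≤ ⨆ k, |x k| :=
    le_ciSup (f := fun k => |x k|) (Finite.bddAbove_range _)
  have hx0 : 0 ≤ ⨆ k, |x k| := Real.iSup_nonneg fun k => abs_nonneg _
  refine Real.iSup_le (fun i => ?_) (mul_nonneg hR hx0)
  calc |(M *ᵥ x) i| ≤ ∑ j, |M i j| * |x j| := abs_mulVec_le M x i
    _ ≤ ∑ j, |M i j| * ⨆ k, |x k| :=
        sum_le_sum fun j _ => mul_le_mul_of_nonneg_left (hx j) (abs_nonneg _)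
    _ = (∑ j, |M i j|) * ⨆ k, |x k| := by rw [sum_mul]
    _ ≤ R * ⨆ k, |x k| := mul_le_mul_of_nonneg_right (hrow i) hx0

lemma sum_abs_mulVec_rpow_le (M : Matrix α β ℝ) {C R : ℝ} (hR : 0 ≤ R)
    (hrow : ∀ i, ∑ j, |M i j| ≤ R) (hcol : ∀ j, ∑ i, |M i j| ≤ C)
    {t : ℝ} (ht : 1 ≤ t) (x : β → ℝ) :
    ∑ i, |(M *ᵥ x) i| ^ t ≤ R ^ (t - 1) * C * ∑ j, |x j| ^ t := by
  have ht0 : 0 < t := one_pos.trans_le ht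
  have hRt : 0 ≤ R ^ (t - 1) := Real.rpow_nonneg hR _
  have hrow_t : ∀ i, |(M *ᵥ x) i| ^ t ≤ R ^ (t - 1) * ∑ j, |M i j| * |x j| ^ t := fun i =>
    calc |(M *ᵥ x) i| ^ t ≤ (∑ j, |M i j| * |x j|) ^ t :=
          Real.rpow_le_rpow (abs_nonneg _) (abs_mulVec_le M x i) ht0.le
      _ ≤ (∑ j, |M i j|) ^ (t - 1) * ∑ j, |M i j| * |x j| ^ t :=
          rpow_sum_mul_le ht _ _ (fun j => abs_nonneg _) (fun j => abs_nonneg _)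
      _ ≤ R ^ (t - 1) * ∑ j, |M i j| * |x j| ^ t :=
          mul_le_mul_of_nonneg_right
            (Real.rpow_le_rpow (sum_nonneg fun j _ => abs_nonneg _) (hrow i) (by linarith))
            (sum_nonneg fun j _ => mul_nonneg (abs_nonneg _) (Real.rpow_nonneg (abs_nonneg _) _))
  calc ∑ i, |(M *ᵥ x) i| ^ t ≤ ∑ i, R ^ (t - 1) * ∑ j, |M i j| * |x j| ^ t :=
        sum_le_sum fun i _ => hrow_t i
    _ = R ^ (t - 1) * ∑ j, (∑ i, |M i j|) * |x j| ^ t := by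
        simp only [← mul_sum, sum_mul]
        rw [sum_comm]
    _ ≤ R ^ (t - 1) * ∑ j, C * |x j| ^ t :=
        mul_le_mul_of_nonneg_left (sum_le_sum fun j _ =>
          mul_le_mul_of_nonneg_right (hcol j) (Real.rpow_nonneg (abs_nonneg _) _)) hRt
    _ = R ^ (t - 1) * C * ∑ j, |x j| ^ t := by rw [← mul_sum, mul_assoc]

lemma lpNorm_mulVec_le (M : Matrix α β ℝ) {C R : ℝ} (hC : 0 ≤ C) (hR : 0 ≤ R)
    (hrow : ∀ i, ∑ j, |M i j| ≤ R) (hcol : ∀ j, ∑ i, |M i j| ≤ C)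
    {p : ℝ≥0∞} (hp : 1 ≤ p) (x : β → ℝ) :
    lpNorm p (M *ᵥ x) ≤ C ^ (1 / p).toReal * R ^ (1 - (1 / p).toReal) * lpNorm p x := by
  rcases eq_or_ne p ∞ with rfl | hp_top
  · simpa using lpNorm_top_mulVec_le M hR hrow x
  set t := p.toReal
  have ht : 1 ≤ t := by simpa using ENNReal.toReal_mono hp_top hp
  have ht0 : 0 < t := one_pos.trans_le ht
  have hx : 0 ≤ ∑ j, |x j| ^ t := sum_nonneg fun j _ => Real.rpow_nonneg (abs_nonneg _) _
  simp only [lpNorm, hp_top, if_false, one_div, ENNReal.toReal_inv]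
  calc (∑ i, |(M *ᵥ x) i| ^ t) ^ t⁻¹
      ≤ (R ^ (t - 1) * C * ∑ j, |x j| ^ t) ^ t⁻¹ :=
        Real.rpow_le_rpow (sum_nonneg fun i _ => Real.rpow_nonneg (abs_nonneg _) _)
          (sum_abs_mulVec_rpow_le M hR hrow hcol ht x) (inv_nonneg.mpr ht0.le)
    _ = C ^ t⁻¹ * R ^ (1 - t⁻¹) * (∑ j, |x j| ^ t) ^ t⁻¹ := by
        rw [Real.mul_rpow (mul_nonneg (Real.rpow_nonneg hR _) hC) hx,
          Real.mul_rpow (Real.rpow_nonneg hR _) hC, ← Real.rpow_mul hR, sub_mul, one_mul,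
          mul_inv_cancel₀ ht0.ne', mul_comm (R ^ _)]

lemma opNormP_le_of_lpNorm_mulVec_le (p : ℝ≥0∞) (M : Matrix α β ℝ) {K : ℝ} (hK : 0 ≤ K)
    (h : ∀ x, lpNorm p (M *ᵥ x) ≤ K * lpNorm p x) : opNormP p M ≤ K := by
  refine Real.sSup_le ?_ hK
  rintro _ ⟨x, hx, rfl⟩
  exact (div_le_iff₀ (lpNorm_pos p hx)).mpr (h x)

theorem opNormP_le_of_sum_abs_le (M : Matrix α β ℝ) {C R : ℝ} (hC : 0 ≤ C) (hR : 0 ≤ R)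
    (hrow : ∀ i, ∑ j, |M i j| ≤ R) (hcol : ∀ j, ∑ i, |M i j| ≤ C)
    {p : ℝ≥0∞} (hp : 1 ≤ p) :
    opNormP p M ≤ C ^ (1 / p).toReal * R ^ (1 - (1 / p).toReal) :=
  opNormP_le_of_lpNorm_mulVec_le p M (by positivity) (lpNorm_mulVec_le M hC hR hrow hcol hp)

end SchurTest

lemma sum_comp_le_sum_of_injOn {ι κ : Type*} [Fintype κ] [DecidableEq κ] (s : Finset ι)
    {φ : ι → κ} (hφ : Set.InjOn φ s) {g : κ → ℝ} (hg : ∀ k, 0 ≤ g k) :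
    ∑ x ∈ s, g (φ x) ≤ ∑ k, g k := by
  rw [← sum_image hφ]
  exact sum_le_univ_sum_of_nonneg hg

section Toeplitz

variable {f d : ℕ}

abbrev InBand (f : ℕ) (a b : Fin d) : Prop :=
  -(f : ℤ) ≤ (b : ℤ) - a ∧ (b : ℤ) - a ≤ f

/-- The mask index `f - b + a`, clamped into `Fin (2f+1)`; it is exact on the band. -/
def maskIdx (f : ℕ) (a b : Fin d) : Fin (2 * f + 1) :=
  ⟨min ((f : ℤ) - b + a).toNat (2 * f), by omega⟩

lemma T1_apply (u : Fin (2 * f + 1) → ℝ) (a b : Fin d) :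
    T1 f d u a b = if InBand f a b then u (maskIdx f a b) else 0 := by
  unfold T1 maskIdx
  split_ifs
  · congr 1; ext; simp only; omega
  · rfl

lemma T2_apply (v : Fin (2 * f + 1) → Fin (2 * f + 1) → ℝ) (P Q : Fin d × Fin d) :
    T2 f d v P Q = if InBand f P.1 Q.1 then T1 f d (v (maskIdx f P.1 Q.1)) P.2 Q.2 else 0 := by
  unfold T2 maskIdx
  split_ifs
  · congr 3; omega
  · rfl

lemma maskIdx_injOn_right (a : Fin d) : Set.InjOn (maskIdx f a) {b | InBand f a b} := by
  intro b (hb : InBand f a b) b' (hb' : InBand f a b') h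
  simp only [maskIdx, Fin.ext_iff] at h
  ext; omega

lemma maskIdx_injOn_left (b : Fin d) : Set.InjOn (maskIdx f · b) {a | InBand f a b} := by
  intro a (ha : InBand f a b) a' (ha' : InBand f a' b) h
  simp only [maskIdx, Fin.ext_iff] at h
  ext; omega

lemma sum_band_row_le (a : Fin d) {g : Fin (2 * f + 1) → ℝ} (hg : ∀ k, 0 ≤ g k) :
    ∑ b, (if InBand f a b then g (maskIdx f a b) else 0) ≤ ∑ k, g k := by
  rw [← sum_filter]
  exact sum_comp_le_sum_of_injOn _ (fun b hb b' hb' => maskIdx_injOn_right a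
    (mem_filter.mp hb).2 (mem_filter.mp hb').2) hg

lemma sum_band_col_le (b : Fin d) {g : Fin (2 * f + 1) → ℝ} (hg : ∀ k, 0 ≤ g k) :
    ∑ a, (if InBand f a b then g (maskIdx f a b) else 0) ≤ ∑ k, g k := by
  rw [← sum_filter]
  exact sum_comp_le_sum_of_injOn _ (fun a ha a' ha' => maskIdx_injOn_left b
    (mem_filter.mp ha).2 (mem_filter.mp ha').2) hg

lemma sum_abs_T1_row_le (u : Fin (2 * f + 1) → ℝ) (a : Fin d) :
    ∑ b, |T1 f d u a b| ≤ ∑ k, |u k| := by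
  simpa only [T1_apply, apply_ite, abs_zero] using sum_band_row_le a fun k => abs_nonneg (u k)

lemma sum_abs_T1_col_le (u : Fin (2 * f + 1) → ℝ) (b : Fin d) :
    ∑ a, |T1 f d u a b| ≤ ∑ k, |u k| := by
  simpa only [T1_apply, apply_ite, abs_zero] using sum_band_col_le b fun k => abs_nonneg (u k)

lemma sum_abs_T2_row_le (v : Fin (2 * f + 1) → Fin (2 * f + 1) → ℝ) (P : Fin d × Fin d) :
    ∑ Q, |T2 f d v P Q| ≤ ∑ k, ∑ l, |v k l| := by
  calc ∑ Q, |T2 f d v P Q|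
      = ∑ b, if InBand f P.1 b then ∑ b', |T1 f d (v (maskIdx f P.1 b)) P.2 b'| else 0 := by
        simp only [Fintype.sum_prod_type, T2_apply, apply_ite, abs_zero, sum_ite_irrel,
          sum_const_zero]
    _ ≤ ∑ b, if InBand f P.1 b then ∑ l, |v (maskIdx f P.1 b) l| else 0 := by
        gcongr with b
        split_ifs
        exacts [sum_abs_T1_row_le _ _, le_rfl]
    _ ≤ ∑ k, ∑ l, |v k l| := sum_band_row_le P.1 fun k => sum_nonneg fun l _ => abs_nonneg _

lemma sum_abs_T2_col_le (v : Fin (2 * f + 1) → Fin (2 * f + 1) → ℝ) (Q : Fin d × Fin d) :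
    ∑ P, |T2 f d v P Q| ≤ ∑ k, ∑ l, |v k l| := by
  calc ∑ P, |T2 f d v P Q|
      = ∑ a, if InBand f a Q.1 then ∑ a', |T1 f d (v (maskIdx f a Q.1)) a' Q.2| else 0 := by
        simp only [Fintype.sum_prod_type, T2_apply, apply_ite, abs_zero, sum_ite_irrel,
          sum_const_zero]
    _ ≤ ∑ a, if InBand f a Q.1 then ∑ l, |v (maskIdx f a Q.1) l| else 0 := by
        gcongr with a
        split_ifs
        exacts [sum_abs_T1_col_le _ _, le_rfl]
    _ ≤ ∑ k, ∑ l, |v k l| := sum_band_col_le Q.1 fun k => sum_nonneg fun l _ => abs_nonneg _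

lemma sum_abs_Tmulti_row_le {cin cout : ℕ}
    (w : Fin cout → Fin cin → Fin (2 * f + 1) → Fin (2 * f + 1) → ℝ)
    (P : Fin cout × Fin d × Fin d) :
    ∑ Q, |Tmulti f d cin cout w P Q| ≤ ∑ j, ∑ k, ∑ l, |w P.1 j k l| := by
  rw [Fintype.sum_prod_type]
  exact sum_le_sum fun j _ => sum_abs_T2_row_le (w P.1 j) P.2

lemma sum_abs_Tmulti_col_le {cin cout : ℕ}
    (w : Fin cout → Fin cin → Fin (2 * f + 1) → Fin (2 * f + 1) → ℝ)
    (Q : Fin cin × Fin d × Fin d) :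
    ∑ P, |Tmulti f d cin cout w P Q| ≤ ∑ i, ∑ k, ∑ l, |w i Q.1 k l| := by
  rw [Fintype.sum_prod_type]
  exact sum_le_sum fun i _ => sum_abs_T2_col_le (w i Q.1) Q.2

end Toeplitz

theorem stmt6_general
    (f d cin cout : ℕ)
    (w : Fin cout → Fin cin → Fin (2*f+1) → Fin (2*f+1) → ℝ)
    (p : ℝ≥0∞) (hp : 1 ≤ p) :
    opNormP p (Tmulti f d cin cout w)
      ≤ (⨆ j : Fin cin, ∑ i, ∑ i', ∑ j', |w i j i' j'|) ^ ((1/p).toReal)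
        * (⨆ i : Fin cout, ∑ j, ∑ i', ∑ j', |w i j i' j'|) ^ (1 - (1/p).toReal) := by
  refine opNormP_le_of_sum_abs_le _ (Real.iSup_nonneg fun j => by positivity)
    (Real.iSup_nonneg fun i => by positivity)
    (fun P => (sum_abs_Tmulti_row_le w P).trans ?_)
    (fun Q => (sum_abs_Tmulti_col_le w Q).trans ?_) hp
  · exact le_ciSup (f := fun i => ∑ j, ∑ i', ∑ j', |w i j i' j'|) (Finite.bddAbove_range _) _
  · exact le_ciSup (f := fun j => ∑ i, ∑ i', ∑ j', |w i j i' j'|) (Finite.bddAbove_range _) _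

theorem stmt6
    (f d cin cout : ℕ) (hf : 0 < f) (hd : 0 < d) (hfd : f + 1 ≤ d)
    (hcin : 0 < cin) (hcout : 0 < cout)
    (w : Fin cout → Fin cin → Fin (2*f+1) → Fin (2*f+1) → ℝ)
    (p : ℝ≥0∞) (hp : 1 ≤ p) :
    opNormP p (Tmulti f d cin cout w)
      ≤ (⨆ j : Fin cin, ∑ i, ∑ i', ∑ j', |w i j i' j'|) ^ ((1/p).toReal)
        * (⨆ i : Fin cout, ∑ j, ∑ i', ∑ j', |w i j i' j'|) ^ (1 - (1/p).toReal) :=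
  stmt6_general f d cin cout w p hp

end
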